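/- arXiv:1309.4320 — 4 statements merged into one kernel-verified Lean document; each statement's English description precedes it below -/
import Mathlib

section
/- Let p be a prime, k an integer with k ≥ 2, and let χ and ψ be Dirichlet characters with χ(p) = 1. Define e_n = Σ_{m | n} χ(n/m)·ψ(m)·m^{k-1}. Then for all integers ℓ, r ≥ 1, p^r divides e_{ℓp^r} − e_{ℓp^{r-1}} (as algebraic integers, i.e. the difference lies in p^r times the ring of integers of the cyclotomic field containing the character values). -/
/-! When `χ p = 1`, the terms of `e (p * n)` indexed by divisors of `n` reproduce `e n`, since
`χ (p * n / m) = χ p * χ (n / m)`. Each remaining divisor `m` of `p * n` does not divide `n`, so it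
carries one more factor of `p` than `n` does; when `p ^ r ∣ n` this gives `p ^ (r + 1) ∣ m`, hence
`p ^ (r + 1) ∣ m ^ (k - 1)` for `k ≥ 2`. Character values are roots of unity or zero, so they are
algebraic integers. -/

open Finset

theorem MulChar.isIntegral_apply {M R : Type*} [CommMonoid M] [Finite Mˣ] [CommRing R]
    (χ : MulChar M R) (a : M) : IsIntegral ℤ (χ a) := by
  by_cases ha : IsUnit a
  · obtain ⟨u, rfl⟩ := ha
    have hroot : χ u ^ orderOf u = 1 := by
      rw [← map_pow, ← Units.val_pow_eq_pow_val, pow_orderOf_eq_one, Units.val_one, map_one]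
    exact IsIntegral.of_pow (_root_.orderOf_pos u) (hroot ▸ isIntegral_one)
  · rw [χ.map_nonunit ha]
    exact isIntegral_zero

theorem Nat.Prime.pow_succ_dvd_of_dvd_mul_of_not_dvd {p n m r : ℕ} (hp : p.Prime)
    (hpn : p ^ r ∣ n) (hm : m ∣ p * n) (hmn : ¬ m ∣ n) : p ^ (r + 1) ∣ m := by
  have hn : n ≠ 0 := by rintro rfl; exact hmn (dvd_zero m)
  have hm0 : m ≠ 0 := by rintro rfl; exact hn (by simpa [hp.ne_zero] using hm)
  rw [hp.pow_dvd_iff_le_factorization hm0]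
  by_contra! hlt
  refine hmn ((Nat.factorization_le_iff_dvd hm0 hn).mp fun q => ?_)
  have hmq := (Nat.factorization_le_iff_dvd hm0 (mul_ne_zero hp.ne_zero hn)).mpr hm q
  rw [Nat.factorization_mul hp.ne_zero hn, Finsupp.add_apply, hp.factorization,
    Finsupp.single_apply] at hmq
  have hr := (hp.pow_dvd_iff_le_factorization hn).mp hpn
  split_ifs at hmq with hpq
  · subst hpq; omega
  · omega

section Eisenstein

variable {N M : ℕ} {R : Type*} [CommRing R]

def eisensteinCoeff (χ : DirichletCharacter R N) (ψ : DirichletCharacter R M)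
    (k n : ℕ) : R :=
  ∑ m ∈ n.divisors, χ ((n / m : ℕ) : ZMod N) * ψ (m : ZMod M) * (m : R) ^ (k - 1)

theorem eisensteinCoeff_prime_mul_sub {p : ℕ} (hp : p.Prime) {k : ℕ} (hk : 2 ≤ k)
    (χ : DirichletCharacter R N) (ψ : DirichletCharacter R M) (hχp : χ p = 1)
    {n r : ℕ} (hpn : p ^ r ∣ n) :
    ∃ z : R, IsIntegral ℤ z ∧
      eisensteinCoeff χ ψ k (p * n) - eisensteinCoeff χ ψ k n = (p : R) ^ (r + 1) * z := by
  have hsub : n.divisors ⊆ (p * n).divisors := fun m hm =>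
    Nat.mem_divisors.2 ⟨(Nat.dvd_of_mem_divisors hm).mul_left p,
      mul_ne_zero hp.ne_zero (Nat.mem_divisors.1 hm).2⟩
  have hshared : ∀ m ∈ n.divisors,
      χ ((p * n / m : ℕ) : ZMod N) * ψ (m : ZMod M) * (m : R) ^ (k - 1) =
        χ ((n / m : ℕ) : ZMod N) * ψ (m : ZMod M) * (m : R) ^ (k - 1) := fun m hm => by
    rw [Nat.mul_div_assoc p (Nat.dvd_of_mem_divisors hm), Nat.cast_mul, map_mul, hχp, one_mul]
  have hnew : ∀ m ∈ (p * n).divisors \ n.divisors, p ^ (r + 1) ∣ m ^ (k - 1) := fun m hm => by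
    rw [mem_sdiff, Nat.mem_divisors, Nat.mem_divisors, not_and] at hm
    have hmn : ¬ m ∣ n := fun h => hm.2 h (right_ne_zero_of_mul hm.1.2)
    exact (hp.pow_succ_dvd_of_dvd_mul_of_not_dvd hpn hm.1.1 hmn).trans (dvd_pow_self m (by omega))
  refine ⟨∑ m ∈ (p * n).divisors \ n.divisors,
    χ ((p * n / m : ℕ) : ZMod N) * ψ (m : ZMod M) * ((m ^ (k - 1) / p ^ (r + 1) : ℕ) : R), ?_, ?_⟩
  · exact IsIntegral.sum _ fun m _ =>
      ((χ.isIntegral_apply _).mul (ψ.isIntegral_apply _)).mul (isIntegral_natCast _)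
  · rw [eisensteinCoeff, eisensteinCoeff, ← sum_sdiff hsub, ← sum_congr rfl hshared,
      add_sub_cancel_right, mul_sum]
    refine sum_congr rfl fun m hm => ?_
    have hpow : (m : R) ^ (k - 1) = (p : R) ^ (r + 1) * ((m ^ (k - 1) / p ^ (r + 1) : ℕ) : R) := by
      rw [← Nat.cast_pow, ← Nat.cast_pow, ← Nat.cast_mul, Nat.mul_div_cancel' (hnew m hm)]
    rw [hpow]
    ring

end Eisenstein

theorem eisenstein_coeff_congruence_general {N M : ℕ} (p : ℕ) (hp : p.Prime) (k : ℕ) (hk : 2 ≤ k)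
    (χ : DirichletCharacter ℂ N) (ψ : DirichletCharacter ℂ M)
    (hχp : χ ((p : ℕ) : ZMod N) = 1)
    (e : ℕ → ℂ)
    (he : ∀ n : ℕ, e n = ∑ m ∈ n.divisors, χ ((n / m : ℕ) : ZMod N) * ψ ((m : ℕ) : ZMod M) *
      (m : ℂ) ^ (k - 1))
    (ℓ : ℕ) (r : ℕ) (hr : 1 ≤ r) :
    ∃ z : ℂ, IsIntegral ℤ z ∧ e (ℓ * p ^ r) - e (ℓ * p ^ (r - 1)) = (p : ℂ) ^ r * z := by
  obtain rfl : e = eisensteinCoeff χ ψ k := funext he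
  obtain ⟨s, rfl⟩ : ∃ s, r = s + 1 := ⟨r - 1, by omega⟩
  rw [Nat.add_sub_cancel, show ℓ * p ^ (s + 1) = p * (ℓ * p ^ s) by ring]
  exact eisensteinCoeff_prime_mul_sub hp hk χ ψ hχp (dvd_mul_left _ ℓ)

/-- when `χ(p) = 1`, the Eisenstein coefficients satisfy
`e_{ℓp^r} ≡ e_{ℓp^{r-1}} mod p^r` as algebraic integers: the difference is
`p^r` times an algebraic integer. -/
theorem eisenstein_coeff_congruence {N M : ℕ} (p : ℕ) (hp : p.Prime) (k : ℕ) (hk : 2 ≤ k)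
    (χ : DirichletCharacter ℂ N) (ψ : DirichletCharacter ℂ M)
    (hχp : χ ((p : ℕ) : ZMod N) = 1)
    (e : ℕ → ℂ)
    (he : ∀ n : ℕ, e n = ∑ m ∈ n.divisors, χ ((n / m : ℕ) : ZMod N) * ψ ((m : ℕ) : ZMod M) *
      (m : ℂ) ^ (k - 1))
    (ℓ : ℕ) (hℓ : 1 ≤ ℓ) (r : ℕ) (hr : 1 ≤ r) :
    ∃ z : ℂ, IsIntegral ℤ z ∧ e (ℓ * p ^ r) - e (ℓ * p ^ (r - 1)) = (p : ℂ) ^ r * z :=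
  eisenstein_coeff_congruence_general p hp k hk χ ψ hχp e he ℓ r hr
end

section
/- Let p be a prime and let t ∈ ℤ_(p)[[u]] be a formal power series with t(0) = 0 (zero constant term). Then for every positive integer n, every coefficient of the power series t(u)^{np} − t(u^p)^n lies in np·ℤ_(p); moreover the lowest-order term of t(u)^{np} − t(u^p)^n has degree at least np. -/
/-!
Since its coefficients are `p`-integral, `t` lifts to `ℤ_[p]⟦u⟧`. Reducing to `ZMod p`, where
the Frobenius is the identity, gives `t(u)^p ≡ t(u^p) mod p`. Raising a congruence mod `p` to the
power `n = p^k m` with `p ∤ m` upgrades it to a congruence mod `p^(k+1)`, and `p^(k+1)` is `np` up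
to a unit of `ℤ_[p]`. The coefficients then descend to `ℚ` because `ℤ_[p] ∩ ℚ = ℤ_(p)`. The order
bound holds because `u ∣ t` forces `u^p ∣ t(u^p)`.
-/

open PowerSeries

/-- `x ∈ ℤ_(p)`: `x` is a rational number whose denominator is prime to `p`. -/
def PInt (p : ℕ) (x : ℚ) : Prop := ∃ a b : ℤ, ¬ (p : ℤ) ∣ b ∧ (b : ℚ) * x = (a : ℚ)

/-- Composition of a power series with `u ↦ u^p`. -/
noncomputable def substPow (p : ℕ) (t : PowerSeries ℚ) : PowerSeries ℚ :=
  PowerSeries.mk fun n => if p ∣ n then coeff (n / p) t else 0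

namespace PowerSeries

theorem C_dvd_of_forall_dvd_coeff {R : Type*} [CommSemiring R] {a : R} {f : R⟦X⟧}
    (h : ∀ n, a ∣ coeff n f) : C a ∣ f := by
  choose g hg using h
  exact ⟨mk g, by ext n; simp [coeff_C_mul, hg]⟩

theorem exists_map_eq_of_coeff_mem_range {R S : Type*} [CommSemiring R] [CommSemiring S]
    (φ : R →+* S) {f : S⟦X⟧} (h : ∀ n, coeff n f ∈ Set.range φ) : ∃ F : R⟦X⟧, map φ F = f := by
  choose g hg using h
  exact ⟨mk g, by ext n; simp [hg]⟩

theorem map_frobenius_expand {R : Type*} [CommRing R] (p : ℕ) (hp : p ≠ 0) [ExpChar R p]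
    (f : R⟦X⟧) : map (frobenius R p) (expand p hp f) = f ^ p :=
  MvPowerSeries.map_frobenius_expand p hp

theorem X_pow_mul_dvd_pow_sub_expand_pow {R : Type*} [CommRing R] (p : ℕ) (hp : p ≠ 0)
    {f : R⟦X⟧} (hf : X ∣ f) (n : ℕ) : X ^ (n * p) ∣ (f ^ p) ^ n - expand p hp f ^ n := by
  have hXp : X ^ p ∣ expand p hp f := by simpa using map_dvd (expand p hp) hf
  rw [pow_mul']
  exact dvd_sub (pow_dvd_pow_of_dvd (pow_dvd_pow_of_dvd hf p) n) (pow_dvd_pow_of_dvd hXp n)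

end PowerSeries

theorem pInt_iff_not_dvd_den {p : ℕ} {x : ℚ} : PInt p x ↔ ¬ p ∣ x.den := by
  constructor
  · rintro ⟨a, b, hb, hab⟩ hden
    have hb0 : (b : ℚ) ≠ 0 := Int.cast_ne_zero.mpr (by rintro rfl; exact hb (dvd_zero _))
    have hx : x = Rat.divInt a b := by rw [Rat.divInt_eq_div]; field_simp; linarith
    exact hb ((Int.natCast_dvd_natCast.mpr hden).trans (hx ▸ Rat.den_dvd a b))
  · exact fun h => ⟨x.num, x.den, by exact_mod_cast h, by
      rw [mul_comm]; exact_mod_cast Rat.mul_den_eq_num x⟩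

section

variable {p : ℕ} [hp : Fact p.Prime]

theorem pInt_iff_norm_le_one {x : ℚ} : PInt p x ↔ ‖(x : ℚ_[p])‖ ≤ 1 := by
  rw [pInt_iff_not_dvd_den, Padic.norm_rat_le_one_iff_padicValuation_le_one,
    Rat.padicValuation_le_one_iff]

namespace PadicInt

theorem isUnit_natCast_of_not_dvd {m : ℕ} (h : ¬ p ∣ m) : IsUnit (m : ℤ_[p]) := by
  by_contra hu
  rw [not_isUnit_iff, ← Int.cast_natCast, norm_int_lt_one_iff_dvd] at hu
  exact h (by exact_mod_cast hu)

theorem natCast_dvd_pow_sub_expand (f : ℤ_[p]⟦X⟧) :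
    (p : ℤ_[p]⟦X⟧) ∣ f ^ p - expand p hp.out.ne_zero f := by
  have hzero : map toZMod (f ^ p - expand p hp.out.ne_zero f) = 0 := by
    rw [map_sub, map_pow, map_expand, ← map_frobenius_expand p hp.out.ne_zero,
      ZMod.frobenius_zmod, map_id, id_eq, sub_self]
  rw [← map_natCast C]
  refine C_dvd_of_forall_dvd_coeff fun n => ?_
  rw [← Ideal.mem_span_singleton, ← maximalIdeal_eq_span_p, ← ker_toZMod, RingHom.mem_ker,
    ← coeff_map, hzero, map_zero]

theorem natCast_mul_dvd_pow_sub_pow {A : Type*} [CommRing A] [Algebra ℤ_[p] A] {a b : A}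
    (h : (p : A) ∣ a - b) (n : ℕ) : ((n * p : ℕ) : A) ∣ a ^ n - b ^ n := by
  rcases eq_or_ne n 0 with rfl | hn
  · simp
  obtain ⟨k, m, hpm, rfl⟩ := Nat.exists_eq_pow_mul_and_not_dvd hn p hp.out.ne_one
  have hm : IsUnit (m : A) := by
    simpa using (isUnit_natCast_of_not_dvd hpm).map (algebraMap ℤ_[p] A)
  have hnp : ((p ^ k * m * p : ℕ) : A) = p ^ (k + 1) * m := by push_cast; ring
  rw [hnp, hm.mul_right_dvd, pow_mul, pow_mul]
  exact (dvd_sub_pow_of_dvd_sub h k).trans (sub_dvd_pow_sub_pow _ _ m)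

end PadicInt

theorem exists_mul_eq_natCast_mul_of_cast_eq {c : ℚ} {N : ℕ} {g : ℤ_[p]}
    (h : (c : ℚ_[p]) = N * g) : ∃ a b : ℤ, ¬ (p : ℤ) ∣ b ∧ (b : ℚ) * c = N * a := by
  rcases eq_or_ne N 0 with rfl | hN
  · refine ⟨0, 1, ?_, ?_⟩
    · exact_mod_cast hp.out.not_dvd_one
    · simpa using h
  have hnorm : ‖((c / N : ℚ) : ℚ_[p])‖ ≤ 1 := by
    push_cast
    rw [h, mul_div_cancel_left₀ _ (by exact_mod_cast hN)]
    exact g.norm_le_one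
  obtain ⟨a, b, hb, hab⟩ := pInt_iff_norm_le_one.mpr hnorm
  refine ⟨a, b, hb, ?_⟩
  rw [← hab]
  field_simp

end

theorem pow_sub_substPow_pow_mem_general (p : ℕ) (hp : p.Prime) (t : PowerSeries ℚ)
    (ht : ∀ n : ℕ, PInt p (coeff n t)) (ht0 : constantCoeff t = 0)
    (n : ℕ) :
    (∀ m : ℕ, ∃ a b : ℤ, ¬ (p : ℤ) ∣ b ∧
        (b : ℚ) * coeff m (t ^ (n * p) - (substPow p t) ^ n) = ((n * p : ℕ) : ℚ) * a) ∧
    (∀ m : ℕ, m < n * p → coeff m (t ^ (n * p) - (substPow p t) ^ n) = 0) := by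
  have := Fact.mk hp
  have hsubst : substPow p t = expand p hp.ne_zero t := by
    ext m; simp [substPow, coeff_expand]
  rw [hsubst, pow_mul']
  refine ⟨fun m => ?_, fun m hm => ?_⟩
  · obtain ⟨T, hT⟩ := exists_map_eq_of_coeff_mem_range PadicInt.Coe.ringHom
      (f := map (Rat.castHom ℚ_[p]) t)
      fun i => ⟨⟨(coeff i t : ℚ), pInt_iff_norm_le_one.mp (ht i)⟩, by rw [coeff_map]; rfl⟩
    obtain ⟨G, hG⟩ :=
      PadicInt.natCast_mul_dvd_pow_sub_pow (PadicInt.natCast_dvd_pow_sub_expand T) n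
    refine exists_mul_eq_natCast_mul_of_cast_eq (g := coeff m G) ?_
    calc ((coeff m ((t ^ p) ^ n - expand p hp.ne_zero t ^ n) : ℚ) : ℚ_[p])
        = coeff m (map (Rat.castHom ℚ_[p]) ((t ^ p) ^ n - expand p hp.ne_zero t ^ n)) := by
          rw [coeff_map]; rfl
      _ = coeff m (map PadicInt.Coe.ringHom ((T ^ p) ^ n - expand p hp.ne_zero T ^ n)) := by
          simp only [map_sub, map_pow, map_expand, hT]
      _ = ((n * p : ℕ) : ℚ_[p]) * coeff m G := by
          rw [hG, coeff_map, ← map_natCast C, coeff_C_mul, map_mul, map_natCast]; rfl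
  · exact X_pow_dvd_iff.mp
      (X_pow_mul_dvd_pow_sub_expand_pow p hp.ne_zero (X_dvd_iff.mpr ht0) n) m hm

/-- if `t ∈ ℤ_(p)[[u]]` with `t(0) = 0`, then every coefficient of
`t(u)^{np} − t(u^p)^n` lies in `np·ℤ_(p)`, and the series has order at least `np`. -/
theorem pow_sub_substPow_pow_mem (p : ℕ) (hp : p.Prime) (t : PowerSeries ℚ)
    (ht : ∀ n : ℕ, PInt p (coeff n t)) (ht0 : constantCoeff t = 0)
    (n : ℕ) (hn : 1 ≤ n) :
    (∀ m : ℕ, ∃ a b : ℤ, ¬ (p : ℤ) ∣ b ∧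
        (b : ℚ) * coeff m (t ^ (n * p) - (substPow p t) ^ n) = ((n * p : ℕ) : ℚ) * a) ∧
    (∀ m : ℕ, m < n * p → coeff m (t ^ (n * p) - (substPow p t) ^ n) = 0) :=
  pow_sub_substPow_pow_mem_general p hp t ht ht0 n
end

section
/- For every prime p and all positive integers ℓ and r, the squared central binomial coefficients satisfy C(2ℓp^r, ℓp^r)² ≡ C(2ℓp^{r-1}, ℓp^{r-1})² (mod p^r). -/
open Polynomial in
/-- `C(2ℓp^r, ℓp^r)² ≡ C(2ℓp^{r-1}, ℓp^{r-1})² (mod p^r)`. -/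
theorem central_binomial_sq_congruence (p : ℕ) (hp : p.Prime) (ℓ r : ℕ)
    (hℓ : 1 ≤ ℓ) (hr : 1 ≤ r) :
    (Nat.choose (2 * (ℓ * p ^ r)) (ℓ * p ^ r)) ^ 2 ≡
      (Nat.choose (2 * (ℓ * p ^ (r - 1))) (ℓ * p ^ (r - 1))) ^ 2 [MOD p ^ r] := by
  haveI := Fact.mk hp
  -- Step 1: (p : ℤ[X]) ∣ (1+X)^p - (1+X^p)
  have h1 : (p : ℤ[X]) ∣ (1 + X) ^ p - (1 + X ^ p) := by
    have hC : (p : ℤ[X]) = C (p : ℤ) := by simp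
    rw [hC, C_dvd_iff_dvd_coeff]
    intro i
    rw [← ZMod.intCast_zmod_eq_zero_iff_dvd]
    have hmap : (((1 + X) ^ p - (1 + X ^ p) : ℤ[X])).map (Int.castRingHom (ZMod p)) = 0 := by
      simp only [Polynomial.map_sub, Polynomial.map_pow, Polynomial.map_add,
        Polynomial.map_one, Polynomial.map_X]
      rw [add_pow_char]
      ring
    have h0 : (Int.castRingHom (ZMod p)) ((((1 + X) ^ p - (1 + X ^ p) : ℤ[X])).coeff i) = 0 := by
      rw [← Polynomial.coeff_map, hmap, Polynomial.coeff_zero]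
    simpa using h0
  -- Step 2: mod p^r
  have h2 := dvd_sub_pow_of_dvd_sub h1 (r - 1)
  rw [Nat.sub_add_cancel hr] at h2
  have hpr : p * p ^ (r - 1) = p ^ r := by
    rw [← pow_succ']
    congr 1
    omega
  have h2' : ((p : ℤ[X]) ^ r) ∣ (1 + X) ^ (p ^ r) - (1 + X ^ p) ^ (p ^ (r - 1)) := by
    rw [← hpr, pow_mul]
    exact_mod_cast h2
  -- Step 3: raise to 2ℓ
  have h3 : ((p : ℤ[X]) ^ r) ∣ (1 + X) ^ (2 * (ℓ * p ^ r)) - (1 + X ^ p) ^ (2 * (ℓ * p ^ (r - 1))) := by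
    have := h2'.trans (sub_dvd_pow_sub_pow ((1 + X : ℤ[X]) ^ (p ^ r)) ((1 + X ^ p) ^ (p ^ (r - 1))) (2 * ℓ))
    rwa [← pow_mul, ← pow_mul, mul_comm (p ^ r) (2 * ℓ), mul_comm (p ^ (r-1)) (2 * ℓ),
      mul_assoc, mul_assoc] at this
  -- Step 4: extract coefficient at ℓ * p ^ r
  have hcoeff : ((p : ℤ) ^ r) ∣ ((1 + X : ℤ[X]) ^ (2 * (ℓ * p ^ r)) - (1 + X ^ p) ^ (2 * (ℓ * p ^ (r - 1)))).coeff (ℓ * p ^ r) := by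
    have hC : ((p : ℤ[X]) ^ r) = C ((p : ℤ) ^ r) := by
      rw [C_pow, C_eq_natCast]
    rw [hC, C_dvd_iff_dvd_coeff] at h3
    exact h3 _
  -- compute the two coefficients
  have hc1 : ((1 + X : ℤ[X]) ^ (2 * (ℓ * p ^ r))).coeff (ℓ * p ^ r)
      = ((2 * (ℓ * p ^ r)).choose (ℓ * p ^ r) : ℤ) := by
    simpa using coeff_one_add_X_pow ℤ (2 * (ℓ * p ^ r)) (ℓ * p ^ r)
  have hexp : ((1 + X ^ p : ℤ[X]) ^ (2 * (ℓ * p ^ (r - 1))))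
      = expand ℤ p ((1 + X) ^ (2 * (ℓ * p ^ (r - 1)))) := by
    rw [map_pow, map_add, map_one, expand_X]
  have hdvd : p ∣ ℓ * p ^ r := ⟨ℓ * p ^ (r - 1), by rw [← hpr]; ring⟩
  have hdiv : ℓ * p ^ r / p = ℓ * p ^ (r - 1) := by
    rw [← hpr, mul_comm p, ← mul_assoc, Nat.mul_div_cancel _ hp.pos]
  have hc2 : ((1 + X ^ p : ℤ[X]) ^ (2 * (ℓ * p ^ (r - 1)))).coeff (ℓ * p ^ r)
      = ((2 * (ℓ * p ^ (r - 1))).choose (ℓ * p ^ (r - 1)) : ℤ) := by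
    rw [hexp, coeff_expand hp.pos, if_pos hdvd, hdiv]
    simpa using coeff_one_add_X_pow ℤ (2 * (ℓ * p ^ (r - 1))) (ℓ * p ^ (r - 1))
  rw [Polynomial.coeff_sub, hc1, hc2] at hcoeff
  -- conclude
  have hmod : (2 * (ℓ * p ^ r)).choose (ℓ * p ^ r) ≡ (2 * (ℓ * p ^ (r - 1))).choose (ℓ * p ^ (r - 1)) [MOD p ^ r] := by
    rw [Nat.ModEq.comm, Nat.modEq_iff_dvd]
    push_cast
    exact_mod_cast hcoeff
  exact hmod.pow 2
end

section
/- Define b̃_n = (-1)^n · Σ_{k=0}^{n} C(n,k)² · C(2k,k) · C(2(n-k), n-k). Then for every prime p with p ∤ 6 and all positive integers ℓ, r, one has b̃_{ℓp^r} ≡ b̃_{ℓp^{r-1}} (mod p^r). -/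
/-!
Write `Λ = (1 + x)(x y (1 + z)² + z (1 + y)²)`. Expanding `Λⁿ` by the binomial theorem shows
that `(-1)ⁿ b̃ₙ` is the coefficient of `(x y z)ⁿ` in `Λⁿ`. Diagonal coefficients of powers of any
integral polynomial satisfy these congruences: the substitution `φ : (x, y, z) ↦ (xᵖ, yᵖ, zᵖ)` is a
Frobenius lift, `φ f ≡ fᵖ (mod p)`, hence `φ (f ^ (ℓ pʳ)) ≡ f ^ (ℓ pʳ⁺¹) (mod pʳ⁺¹)`, and the
coefficient of `(x y z)^(p m)` in `φ g` is the coefficient of `(x y z)^m` in `g`. The sign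
`(-1)ⁿ` is harmless because `p` is odd.
-/

open Finset Polynomial

section FrobeniusLift

variable {S : Type*} [CommRing S] {p : ℕ}

theorem pow_dvd_map_pow_sub_pow (φ : S →+* S) (hφ : ∀ a, (p : S) ∣ φ a - a ^ p) (f : S)
    (ℓ r : ℕ) : (p : S) ^ (r + 1) ∣ φ (f ^ (ℓ * p ^ r)) - f ^ (ℓ * p ^ (r + 1)) := by
  have hpow : (p : S) ^ (r + 1) ∣ φ (f ^ p ^ r) - f ^ p ^ (r + 1) := by
    simpa only [map_pow, ← pow_mul, ← pow_succ'] using dvd_sub_pow_of_dvd_sub (hφ f) r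
  simpa only [map_pow, ← pow_mul, mul_comm ℓ] using hpow.trans (sub_dvd_pow_sub_pow _ _ ℓ)

namespace Polynomial

noncomputable def frobeniusLift (p : ℕ) (φ : S →+* S) : S[X] →+* S[X] :=
  (expand S p : S[X] →+* S[X]).comp (mapRingHom φ)

theorem frobeniusLift_apply (φ : S →+* S) (f : S[X]) :
    frobeniusLift p φ f = expand S p (f.map φ) := rfl

theorem coeff_frobeniusLift_mul (hp : 0 < p) (φ : S →+* S) (f : S[X]) (n : ℕ) :
    (frobeniusLift p φ f).coeff (p * n) = φ (f.coeff n) := by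
  rw [frobeniusLift_apply, coeff_expand_mul' hp, coeff_map]

theorem prime_dvd_frobeniusLift_sub_pow (hp : p.Prime) (φ : S →+* S)
    (hφ : ∀ a, (p : S) ∣ φ a - a ^ p) (f : S[X]) :
    (p : S[X]) ∣ frobeniusLift p φ f - f ^ p := by
  induction f using Polynomial.induction_on' with
  | add f g hf hg =>
    obtain ⟨s, hs⟩ := exists_add_pow_prime_eq hp f g
    have hcross : (p : S[X]) ∣ (f + g) ^ p - f ^ p - g ^ p := ⟨f * g * s, by rw [hs]; ring⟩
    convert dvd_sub (dvd_add hf hg) hcross using 1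
    rw [map_add]
    ring
  | monomial m a =>
    obtain ⟨u, hu⟩ := hφ a
    refine ⟨C u * X ^ (m * p), ?_⟩
    rw [frobeniusLift_apply, map_monomial, ← C_mul_X_pow_eq_monomial, ← C_mul_X_pow_eq_monomial,
      map_mul, map_pow, expand_X, expand_C, eq_add_of_sub_eq hu, ← C_eq_natCast]
    simp only [map_add, map_mul, map_pow]
    ring

theorem natCast_dvd_coeff {n : ℕ} {f : S[X]} (h : (n : S[X]) ∣ f) (i : ℕ) :
    (n : S) ∣ f.coeff i :=
  (C_dvd_iff_dvd_coeff _ _).mp (by rwa [map_natCast]) i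

theorem coeff_one_add_X_pow_mul_X_pow {R : Type*} [Semiring R] (m : ℕ) {j n : ℕ} (h : j ≤ n) :
    ((1 + X : R[X]) ^ m * X ^ j).coeff n = (m.choose (n - j) : R) := by
  rw [coeff_mul_X_pow', if_pos h, coeff_one_add_X_pow]

end Polynomial

end FrobeniusLift

section DiagonalCoefficient

/-- For `f ∈ ℤ[x][y][z]`, encoded with `x = C (C X)`, `y = C X`, `z = X`, this is the coefficient
of `(x y z)ⁿ`. -/
noncomputable def diagCoeff (n : ℕ) (f : ℤ[X][X][X]) : ℤ := ((f.coeff n).coeff n).coeff n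

noncomputable def frobenius₃ (p : ℕ) : ℤ[X][X][X] →+* ℤ[X][X][X] :=
  frobeniusLift p (frobeniusLift p (frobeniusLift p (RingHom.id ℤ)))

variable {p : ℕ}

theorem diagCoeff_frobenius₃_mul (hp : 0 < p) (n : ℕ) (f : ℤ[X][X][X]) :
    diagCoeff (p * n) (frobenius₃ p f) = diagCoeff n f := by
  simp only [diagCoeff, frobenius₃, coeff_frobeniusLift_mul hp, RingHom.id_apply]

theorem prime_dvd_frobenius₃_sub_pow (hp : p.Prime) (f : ℤ[X][X][X]) :
    (p : ℤ[X][X][X]) ∣ frobenius₃ p f - f ^ p :=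
  prime_dvd_frobeniusLift_sub_pow hp _
    (prime_dvd_frobeniusLift_sub_pow hp _
      (prime_dvd_frobeniusLift_sub_pow hp (RingHom.id ℤ)
        fun a => dvd_sub_comm.mp (Int.prime_dvd_pow_self_sub hp a))) f

theorem diagCoeff_sub (n : ℕ) (f g : ℤ[X][X][X]) :
    diagCoeff n (f - g) = diagCoeff n f - diagCoeff n g := by
  simp only [diagCoeff, coeff_sub]

theorem natCast_dvd_diagCoeff {m : ℕ} {f : ℤ[X][X][X]} (h : (m : ℤ[X][X][X]) ∣ f) (n : ℕ) :
    (m : ℤ) ∣ diagCoeff n f :=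
  natCast_dvd_coeff (natCast_dvd_coeff (natCast_dvd_coeff h n) n) n

theorem diagCoeff_pow_modEq (Λ : ℤ[X][X][X]) (hp : p.Prime) (ℓ r : ℕ) :
    diagCoeff (ℓ * p ^ (r + 1)) (Λ ^ (ℓ * p ^ (r + 1)))
      ≡ diagCoeff (ℓ * p ^ r) (Λ ^ (ℓ * p ^ r)) [ZMOD (p : ℤ) ^ (r + 1)] := by
  have hdvd := pow_dvd_map_pow_sub_pow _ (prime_dvd_frobenius₃_sub_pow hp) Λ ℓ r
  rw [← Nat.cast_pow] at hdvd
  have hcoeff := natCast_dvd_diagCoeff hdvd (p * (ℓ * p ^ r))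
  rw [diagCoeff_sub, diagCoeff_frobenius₃_mul hp.pos,
    show p * (ℓ * p ^ r) = ℓ * p ^ (r + 1) by ring, Nat.cast_pow] at hcoeff
  exact Int.modEq_iff_dvd.mpr hcoeff

end DiagonalCoefficient

noncomputable def dombPoly : ℤ[X][X][X] :=
  (1 + C (C X)) * (C (C X) * C X * (1 + X) ^ 2 + X * (1 + C X) ^ 2)

theorem dombPoly_pow (n : ℕ) :
    dombPoly ^ n = ∑ k ∈ range (n + 1),
      C (C ((1 + X) ^ n * X ^ k) * ((1 + X) ^ (2 * (n - k)) * X ^ k)) *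
        ((1 + X) ^ (2 * k) * X ^ (n - k)) * (n.choose k : ℤ[X][X][X]) := by
  rw [dombPoly, mul_pow (M := ℤ[X][X][X]),
    add_pow (C (C X) * C X * (1 + X) ^ 2 : ℤ[X][X][X]), mul_sum]
  refine sum_congr rfl fun k _ => ?_
  simp only [map_mul, map_pow, map_add, map_one, mul_pow (M := ℤ[X][X][X]), ← pow_mul]
  ring

theorem diagCoeff_term {n k : ℕ} (hk : k ≤ n) :
    diagCoeff n (C (C ((1 + X) ^ n * X ^ k) * ((1 + X) ^ (2 * (n - k)) * X ^ k)) *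
        ((1 + X) ^ (2 * k) * X ^ (n - k)) * (n.choose k : ℤ[X][X][X]))
      = (n.choose k : ℤ) ^ 2 * ((2 * k).choose k : ℤ) * ((2 * (n - k)).choose (n - k) : ℤ) := by
  simp only [diagCoeff, coeff_mul_natCast, coeff_C_mul,
    coeff_one_add_X_pow_mul_X_pow _ hk, coeff_one_add_X_pow_mul_X_pow _ (n.sub_le k),
    Nat.sub_sub_self hk, Nat.choose_symm hk]
  ring

theorem diagCoeff_dombPoly_pow (n : ℕ) :
    diagCoeff n (dombPoly ^ n) = ∑ k ∈ range (n + 1),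
      (n.choose k : ℤ) ^ 2 * ((2 * k).choose k : ℤ) * ((2 * (n - k)).choose (n - k) : ℤ) := by
  rw [dombPoly_pow, diagCoeff, finsetSum_coeff, finsetSum_coeff, finsetSum_coeff]
  exact sum_congr rfl fun k hk => diagCoeff_term (Nat.lt_succ_iff.mp (mem_range.mp hk))

theorem domb_type_congruence_general (b : ℕ → ℤ)
    (hb : ∀ n : ℕ, b n = (-1 : ℤ) ^ n * ∑ k ∈ range (n + 1),
      ((n.choose k : ℤ)) ^ 2 * ((2 * k).choose k : ℤ) * ((2 * (n - k)).choose (n - k) : ℤ))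
    (p : ℕ) (hp : p.Prime) (hp6 : ¬ p ∣ 6) (ℓ r : ℕ) :
    b (ℓ * p ^ r) ≡ b (ℓ * p ^ (r - 1)) [ZMOD ((p : ℤ) ^ r)] := by
  obtain _ | r := r
  · simp only [pow_zero, Int.modEq_one]
  have hodd : Odd p := hp.odd_of_ne_two (by rintro rfl; exact hp6 (by norm_num))
  have hsign : (-1 : ℤ) ^ (ℓ * p ^ (r + 1)) = (-1) ^ (ℓ * p ^ r) := by
    rw [pow_succ, ← mul_assoc, pow_mul', hodd.neg_one_pow]
  rw [Nat.add_sub_cancel, hb, hb, hsign, ← diagCoeff_dombPoly_pow, ← diagCoeff_dombPoly_pow]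
  exact (diagCoeff_pow_modEq dombPoly hp ℓ r).mul_left _

/-- the numbers `b̃_n = (−1)^n Σ_k C(n,k)² C(2k,k) C(2(n−k),n−k)` satisfy
`b̃_{ℓp^r} ≡ b̃_{ℓp^{r-1}} (mod p^r)` for every prime `p ∤ 6`. -/
theorem domb_type_congruence (b : ℕ → ℤ)
    (hb : ∀ n : ℕ, b n = (-1 : ℤ) ^ n * ∑ k ∈ range (n + 1),
      ((n.choose k : ℤ)) ^ 2 * ((2 * k).choose k : ℤ) * ((2 * (n - k)).choose (n - k) : ℤ))
    (p : ℕ) (hp : p.Prime) (hp6 : ¬ p ∣ 6) (ℓ r : ℕ) (hℓ : 1 ≤ ℓ) (hr : 1 ≤ r) :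
    b (ℓ * p ^ r) ≡ b (ℓ * p ^ (r - 1)) [ZMOD ((p : ℤ) ^ r)] :=
  domb_type_congruence_general b hb p hp hp6 ℓ r
end
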